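/- arXiv:0809.5008 — 4 statements merged into one kernel-verified Lean document; each statement's English description precedes it below -/
import Mathlib

section
/- For integers i and real α with 2 < α and i > ⌈α/2⌉, the ratio of Gamma functions satisfies Γ(i − α/2)/Γ(i) < (i − ⌈α/2⌉)^{−α/2}. -/
/-!
Put `c = α/2`, `k = ⌈c⌉ ≥ 2` and `x = i - k ≥ 1`, so that `i - c = x + (k - c)` with
`0 ≤ k - c < 1`. Log-convexity of `Γ` between `x` and `x + 1` gives `Γ(x + (k - c)) ≤ Γ(x) x^(k-c)`,
while `Γ(x + k) = Γ(x) x (x+1) ⋯ (x+k-1) > Γ(x) x^k` because `k ≥ 2`. Dividing, the ratio is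
below `x^(-c)`.
-/

open Real Set

lemma Real.Gamma_add_le_Gamma_mul_rpow {x s : ℝ} (hx : 0 < x) (hs₀ : 0 ≤ s) (hs₁ : s ≤ 1) :
    Gamma (x + s) ≤ Gamma x * x ^ s := by
  have hΓx := Gamma_pos_of_pos hx
  have hconv := convexOn_log_Gamma.2 (mem_Ioi.2 hx) (mem_Ioi.2 (by linarith : 0 < x + 1))
    (sub_nonneg.2 hs₁) hs₀ (by ring)
  simp only [smul_eq_mul, Function.comp_apply] at hconv
  rw [show (1 - s) * x + s * (x + 1) = x + s by ring, Gamma_add_one hx.ne',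
    log_mul hx.ne' hΓx.ne'] at hconv
  rw [← exp_log (Gamma_pos_of_pos (by linarith : 0 < x + s)),
    ← exp_log (mul_pos hΓx (rpow_pos_of_pos hx s)), log_mul hΓx.ne' (rpow_pos_of_pos hx s).ne',
    log_rpow hx]
  exact exp_le_exp.2 (by linarith)

lemma Real.Gamma_mul_pow_le_Gamma_add_nat {x : ℝ} (hx : 0 < x) (m : ℕ) :
    Gamma x * x ^ m ≤ Gamma (x + m) := by
  induction m with
  | zero => simp
  | succ m ih =>
    rw [Nat.cast_succ, ← add_assoc, Gamma_add_one (by positivity), pow_succ]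
    calc Gamma x * (x ^ m * x) = x * (Gamma x * x ^ m) := by ring
      _ ≤ (x + m) * Gamma (x + m) := by
        gcongr
        exact le_add_of_nonneg_right m.cast_nonneg

lemma Real.Gamma_mul_pow_lt_Gamma_add_nat {x : ℝ} (hx : 0 < x) {m : ℕ} (hm : 2 ≤ m) :
    Gamma x * x ^ m < Gamma (x + m) := by
  obtain ⟨n, rfl⟩ : ∃ n, m = n + 1 := ⟨m - 1, by omega⟩
  have hn : (0 : ℝ) < n := by exact_mod_cast (by omega : 0 < n)
  rw [Nat.cast_succ, ← add_assoc, Gamma_add_one (by positivity), pow_succ]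
  calc Gamma x * (x ^ n * x) = x * (Gamma x * x ^ n) := by ring
    _ < (x + n) * Gamma (x + n) :=
      mul_lt_mul (by linarith) (Gamma_mul_pow_le_Gamma_add_nat hx n)
        (by have := Gamma_pos_of_pos hx; positivity) (by positivity)

lemma Real.Gamma_add_nat_sub_div_Gamma_add_nat_lt {x c : ℝ} {k : ℕ} (hx : 0 < x) (hk : 2 ≤ k)
    (hck : c ≤ k) (hkc : (k : ℝ) - 1 ≤ c) :
    Gamma (x + k - c) / Gamma (x + k) < x ^ (-c) := by
  have hΓx := Gamma_pos_of_pos hx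
  have hlower := Gamma_mul_pow_lt_Gamma_add_nat hx hk
  have hupper : Gamma (x + k - c) ≤ Gamma x * x ^ ((k : ℝ) - c) := by
    rw [add_sub_assoc]
    exact Gamma_add_le_Gamma_mul_rpow hx (by linarith) (by linarith)
  calc Gamma (x + k - c) / Gamma (x + k)
      ≤ Gamma x * x ^ ((k : ℝ) - c) / Gamma (x + k) := by gcongr
    _ < Gamma x * x ^ ((k : ℝ) - c) / (Gamma x * x ^ k) := by gcongr
    _ = x ^ (-c) := by
      rw [mul_div_mul_left _ _ hΓx.ne', ← rpow_natCast, ← rpow_sub hx]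
      ring_nf

/-- For α > 2 and an integer i > ⌈α/2⌉, Γ(i − α/2)/Γ(i) < (i − ⌈α/2⌉)^(−α/2). -/
theorem gamma_ratio_lt (α : ℝ) (hα : 2 < α) (i : ℤ) (hi : ⌈α / 2⌉ < i) :
    Real.Gamma ((i : ℝ) - α / 2) / Real.Gamma (i : ℝ) <
      ((i : ℝ) - (⌈α / 2⌉ : ℤ)) ^ (-(α / 2)) := by
  have hk₂ : 1 < ⌈α / 2⌉ := Int.lt_ceil.2 (by push_cast; linarith)
  obtain ⟨k, hk⟩ : ∃ k : ℕ, ⌈α / 2⌉ = k := Int.eq_ofNat_of_zero_le (by omega)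
  have hck : α / 2 ≤ k := by exact_mod_cast hk ▸ Int.le_ceil (α / 2)
  have hkc : (k : ℝ) - 1 < α / 2 := by
    have := hk ▸ Int.ceil_lt_add_one (α / 2)
    push_cast at this
    linarith
  rw [hk] at hi hk₂ ⊢
  have hx : (0 : ℝ) < i - k := by exact_mod_cast sub_pos.2 hi
  have key := Gamma_add_nat_sub_div_Gamma_add_nat_lt hx (by omega) hck hkc.le
  simpa using key
end

section
/- Let α > 2 be real and k an integer with k > ⌈α/2⌉. Then the series ∑_{i=k+1}^∞ Γ(i − α/2)/Γ(i) converges and is bounded above by (α/2 − 1)^{−1} (k − ⌈α/2⌉)^{1−α/2}. -/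
/-!
Write `a = α/2`, `m = ⌈a⌉` and `x = k - m + 1 + n`, so that the `n`-th term is
`Γ(x + m - a) / Γ(x + m)`. Log-convexity of `Γ` gives Wendel's bound `Γ(x + θ) ≤ Γ(x) x^θ` for
`θ = m - a ∈ [0, 1]`, and `Γ(x + m) ≥ Γ(x) x^m` from the functional equation, so the term is at most
`x^(-a)`. By the mean value theorem `x^(-a) ≤ ((x - 1)^(1-a) - x^(1-a)) / (a - 1)`, and these
bounds telescope to `(k - m)^(1-a) / (a - 1)`.
-/

open Real

namespace Real

theorem Gamma_add_le_Gamma_mul_rpow_s3 {x θ : ℝ} (hx : 0 < x) (hθ₀ : 0 ≤ θ) (hθ₁ : θ ≤ 1) :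
    Gamma (x + θ) ≤ Gamma x * x ^ θ := by
  have hΓ := Gamma_pos_of_pos hx
  have hlog : log (Gamma (x + θ)) ≤ log (Gamma x) + θ * log x := by
    have := convexOn_log_Gamma.2 (Set.mem_Ioi.2 hx) (Set.mem_Ioi.2 (by linarith : 0 < x + 1))
      (sub_nonneg.2 hθ₁) hθ₀ (sub_add_cancel 1 θ)
    simp only [smul_eq_mul, Function.comp_apply, Gamma_add_one hx.ne',
      log_mul hx.ne' hΓ.ne'] at this
    rw [show (1 - θ) * x + θ * (x + 1) = x + θ by ring] at this
    linarith
  calc Gamma (x + θ) = exp (log (Gamma (x + θ))) := (exp_log (Gamma_pos_of_pos (by linarith))).symm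
    _ ≤ exp (log (Gamma x) + θ * log x) := exp_le_exp.2 hlog
    _ = Gamma x * x ^ θ := by rw [exp_add, exp_log hΓ, rpow_def_of_pos hx, mul_comm θ]

theorem Gamma_mul_pow_le_Gamma_add_nat_s3 {x : ℝ} (hx : 0 < x) (n : ℕ) :
    Gamma x * x ^ n ≤ Gamma (x + n) := by
  induction n with
  | zero => simp
  | succ n ih =>
    rw [Nat.cast_succ, ← add_assoc, Gamma_add_one (by positivity), pow_succ, ← mul_assoc,
      mul_comm (x + n)]
    exact mul_le_mul ih (le_add_of_nonneg_right n.cast_nonneg) hx.le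
      (Gamma_pos_of_pos (by positivity)).le

theorem Gamma_add_sub_div_Gamma_add_le_rpow_neg {x a : ℝ} (hx : 0 < x) {n : ℕ}
    (ha : a ≤ n) (hn : (n : ℝ) ≤ a + 1) :
    Gamma (x + n - a) / Gamma (x + n) ≤ x ^ (-a) := by
  have hΓ := Gamma_pos_of_pos hx
  rw [div_le_iff₀ (Gamma_pos_of_pos (by positivity)), add_sub_assoc]
  calc Gamma (x + (n - a)) ≤ Gamma x * x ^ ((n : ℝ) - a) :=
        Gamma_add_le_Gamma_mul_rpow_s3 hx (by linarith) (by linarith)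
    _ = x ^ (-a) * (Gamma x * x ^ n) := by
        rw [rpow_sub hx, rpow_neg hx.le, rpow_natCast]; field_simp
    _ ≤ x ^ (-a) * Gamma (x + n) := by
        gcongr; exact Gamma_mul_pow_le_Gamma_add_nat_s3 hx n

theorem mul_sub_mul_rpow_neg_le_rpow_sub_rpow {p x y : ℝ} (hp : 1 < p) (hx : 0 < x)
    (hxy : x < y) : (p - 1) * (y - x) * y ^ (-p) ≤ x ^ (1 - p) - y ^ (1 - p) := by
  obtain ⟨c, ⟨hxc, hcy⟩, hc⟩ := exists_hasDerivAt_eq_slope (fun t => t ^ (1 - p))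
    (fun t => (1 - p) * t ^ (1 - p - 1)) hxy
    (fun t ht => (continuousAt_rpow_const t (1 - p)
      (Or.inl (by linarith [ht.1] : 0 < t).ne')).continuousWithinAt)
    (fun t ht => hasDerivAt_rpow_const (Or.inl (by linarith [ht.1] : 0 < t).ne'))
  have hc' : x ^ (1 - p) - y ^ (1 - p) = (p - 1) * (y - x) * c ^ (-p) := by
    rw [eq_div_iff (by linarith)] at hc
    rw [show 1 - p - 1 = -p by ring] at hc
    linarith
  rw [hc']
  exact mul_le_mul_of_nonneg_left (rpow_le_rpow_of_nonpos (hx.trans hxc) hcy.le (by linarith))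
    (mul_nonneg (by linarith) (by linarith))

end Real

theorem summable_and_tsum_le_of_le_sub_succ {f g : ℕ → ℝ} (hf : ∀ n, 0 ≤ f n) (hg : ∀ n, 0 ≤ g n)
    (hfg : ∀ n, f n ≤ g n - g (n + 1)) : Summable f ∧ ∑' n, f n ≤ g 0 := by
  have hsum (N : ℕ) : ∑ n ∈ Finset.range N, f n ≤ g 0 :=
    calc ∑ n ∈ Finset.range N, f n ≤ ∑ n ∈ Finset.range N, (g n - g (n + 1)) :=
          Finset.sum_le_sum fun n _ => hfg n
      _ = g 0 - g N := Finset.sum_range_sub' g N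
      _ ≤ g 0 := sub_le_self _ (hg N)
  exact ⟨summable_of_sum_range_le hf hsum, Real.tsum_le_of_sum_range_le hf hsum⟩

/-- For α > 2 and an integer k > ⌈α/2⌉, the series ∑_{i=k+1}^∞ Γ(i − α/2)/Γ(i) converges
and is bounded above by (α/2 − 1)⁻¹ (k − ⌈α/2⌉)^(1 − α/2). -/
theorem gamma_ratio_tail_sum (α : ℝ) (hα : 2 < α) (k : ℤ) (hk : ⌈α / 2⌉ < k) :
    Summable (fun n : ℕ => Real.Gamma (((k : ℝ) + 1 + n) - α / 2) / Real.Gamma ((k : ℝ) + 1 + n)) ∧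
    (∑' n : ℕ, Real.Gamma (((k : ℝ) + 1 + n) - α / 2) / Real.Gamma ((k : ℝ) + 1 + n)) ≤
      (α / 2 - 1)⁻¹ * ((k : ℝ) - (⌈α / 2⌉ : ℤ)) ^ (1 - α / 2) := by
  set a := α / 2 with ha_def
  have ha : 1 < a := by linarith
  have hceil : (⌈a⌉₊ : ℝ) = ⌈a⌉ := natCast_ceil_eq_intCast_ceil (by linarith)
  set K : ℝ := k - ⌈a⌉
  have hK : 1 ≤ K := by
    have : (⌈a⌉ : ℝ) + 1 ≤ k := by exact_mod_cast hk
    linarith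
  have hterm (n : ℕ) : Gamma (k + 1 + n - a) / Gamma (k + 1 + n) ≤ (K + n + 1) ^ (-a) := by
    have := Gamma_add_sub_div_Gamma_add_le_rpow_neg (x := K + n + 1) (by positivity)
      (Nat.le_ceil a) (Nat.ceil_lt_add_one (by linarith)).le
    rwa [hceil, show K + n + 1 + ⌈a⌉ = k + 1 + n by ring] at this
  have htel (n : ℕ) : (K + n + 1) ^ (-a) ≤
      (a - 1)⁻¹ * (K + n) ^ (1 - a) - (a - 1)⁻¹ * (K + (n + 1 : ℕ)) ^ (1 - a) := by
    have := mul_sub_mul_rpow_neg_le_rpow_sub_rpow ha (x := K + n) (y := K + n + 1)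
      (by positivity) (by linarith)
    rw [← mul_sub, le_inv_mul_iff₀ (by linarith), Nat.cast_succ, ← add_assoc]
    rwa [add_sub_cancel_left, mul_one] at this
  have hpos (n : ℕ) : 0 ≤ Gamma (k + 1 + n - a) / Gamma (k + 1 + n) := by
    have : a < k + 1 + n := by linarith [Int.le_ceil a, n.cast_nonneg (α := ℝ)]
    exact div_nonneg (Gamma_pos_of_pos (by linarith)).le (Gamma_pos_of_pos (by linarith)).le
  simpa only [Nat.cast_zero, add_zero] using summable_and_tsum_le_of_le_sub_succ hpos
    (fun n => mul_nonneg (inv_nonneg.2 (by linarith)) (rpow_nonneg (by positivity) _))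
    (fun n => (hterm n).trans (htel n))
end

section
/- Let S ~ χ²_{2(n−k)} (density x^{n−k−1}e^{−x}/(n−k−1)!) and let I ≥ 0 be a random variable independent of S with E[I] ≤ (πd²λ)^{α/2}(α/2 − 1)^{−1}(k − ⌈α/2⌉)^{1−α/2}, where α > 2, d, λ > 0, ⌈α/2⌉ < k < n − 1 are integers. Then for any β > 0 and SNR > 0, P[S/(1/SNR + I) ≤ β] ≤ β((πd²λ)^{α/2}(α/2 − 1)^{−1}(k − ⌈α/2⌉)^{1−α/2} + 1/SNR)/(n − k − 1). -/
open MeasureTheory ProbabilityTheory Real Set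
open scoped Nat

/-! The density `f_j` of the Erlang law (the law of `S` for `j = n - k - 1`) satisfies
`f_{j+1}(x) = x f_j(x) / (j + 1)`, so on `{x ≤ t}` it is at most `t f_j(x) / (j + 1)`, whence
`P[S ≤ t] ≤ t / (n - k - 1)`: this is Markov's inequality for `1/S`, as `E[1/S] = 1/(n - k - 1)`.
Since `I ≥ 0`, outage means `S ≤ β (1/SNR + I)`; conditioning on the independent `I` gives
`P[S ≤ β (1/SNR + I)] ≤ E[β (1/SNR + I)] / (n - k - 1)`, and the bound on `E[I]` concludes. -/

noncomputable def erlangPDFReal (j : ℕ) (x : ℝ) : ℝ :=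
  if 0 < x then x ^ j * exp (-x) / j ! else 0

lemma erlangPDFReal_nonneg (j : ℕ) (x : ℝ) : 0 ≤ erlangPDFReal j x := by
  unfold erlangPDFReal
  split_ifs <;> positivity

lemma measurable_erlangPDFReal (j : ℕ) : Measurable (erlangPDFReal j) :=
  Measurable.ite measurableSet_Ioi (by fun_prop) measurable_const

lemma erlangPDFReal_succ (j : ℕ) (x : ℝ) :
    erlangPDFReal (j + 1) x = x * erlangPDFReal j x / (j + 1) := by
  unfold erlangPDFReal
  split_ifs
  · rw [Nat.factorial_succ]
    push_cast
    field_simp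
    ring
  · simp

lemma erlangPDFReal_eq_gammaPDFReal (j : ℕ) {x : ℝ} (hx : x ≠ 0) :
    erlangPDFReal j x = gammaPDFReal (j + 1) 1 x := by
  unfold erlangPDFReal gammaPDFReal
  rcases hx.lt_or_gt with hneg | hpos
  · simp [hneg.not_gt, hneg.not_ge]
  · rw [if_pos hpos, if_pos hpos.le, add_sub_cancel_right, rpow_natCast,
      Gamma_nat_eq_factorial]
    simp only [one_rpow, one_mul]
    ring

lemma lintegral_erlangPDF (j : ℕ) : ∫⁻ x, ENNReal.ofReal (erlangPDFReal j x) = 1 := by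
  rw [← lintegral_gammaPDF_eq_one (a := j + 1) (r := 1) (by positivity) one_pos]
  refine lintegral_congr_ae ?_
  filter_upwards [Measure.ae_ne volume 0] with x hx
  rw [erlangPDFReal_eq_gammaPDFReal j hx, gammaPDF]

lemma withDensity_erlangPDF_Iic_le (j : ℕ) {t : ℝ} (ht : 0 ≤ t) :
    volume.withDensity (fun x => ENNReal.ofReal (erlangPDFReal (j + 1) x)) (Iic t)
      ≤ ENNReal.ofReal (t / (j + 1)) := by
  rw [withDensity_apply _ measurableSet_Iic]
  calc ∫⁻ x in Iic t, ENNReal.ofReal (erlangPDFReal (j + 1) x)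
      ≤ ∫⁻ x in Iic t, ENNReal.ofReal (t / (j + 1)) * ENNReal.ofReal (erlangPDFReal j x) := by
        refine setLIntegral_mono' measurableSet_Iic fun x (hx : x ≤ t) => ?_
        rw [← ENNReal.ofReal_mul (by positivity), erlangPDFReal_succ, div_mul_eq_mul_div]
        have hf := erlangPDFReal_nonneg j x
        gcongr
    _ ≤ ∫⁻ x, ENNReal.ofReal (t / (j + 1)) * ENNReal.ofReal (erlangPDFReal j x) :=
        setLIntegral_le_lintegral _ _
    _ = ENNReal.ofReal (t / (j + 1)) := by
        rw [lintegral_const_mul _ (measurable_erlangPDFReal j).ennreal_ofReal,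
          lintegral_erlangPDF, mul_one]

namespace ProbabilityTheory

variable {Ω : Type*} [MeasurableSpace Ω] {μ : Measure Ω} {X Y : Ω → ℝ}

lemma IndepFun.measure_le_comp_eq_lintegral [IsFiniteMeasure μ] (hX : Measurable X)
    (hY : Measurable Y) (hXY : IndepFun X Y μ) {g : ℝ → ℝ} (hg : Measurable g) :
    μ {ω | X ω ≤ g (Y ω)} = ∫⁻ ω, μ.map X (Iic (g (Y ω))) ∂μ := by
  have hmap : μ.map (fun ω => (Y ω, X ω)) = (μ.map Y).prod (μ.map X) :=
    (indepFun_iff_map_prod_eq_prod_map_map hY.aemeasurable hX.aemeasurable).mp hXY.symm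
  have hset : MeasurableSet {p : ℝ × ℝ | p.2 ≤ g p.1} :=
    measurableSet_le measurable_snd (hg.comp measurable_fst)
  have hcdf : Measurable fun t => μ.map X (Iic t) :=
    Monotone.measurable fun _ _ hst => measure_mono (Iic_subset_Iic.mpr hst)
  calc μ {ω | X ω ≤ g (Y ω)}
      = μ.map (fun ω => (Y ω, X ω)) {p | p.2 ≤ g p.1} :=
        (Measure.map_apply (hY.prodMk hX) hset).symm
    _ = ∫⁻ y, μ.map X (Iic (g y)) ∂μ.map Y := by rw [hmap, Measure.prod_apply hset]; rfl
    _ = ∫⁻ ω, μ.map X (Iic (g (Y ω))) ∂μ := lintegral_map (hcdf.comp hg) hY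

theorem IndepFun.measure_le_mul_add_le [IsProbabilityMeasure μ] (hX : Measurable X)
    (hY : Measurable Y) (hXY : IndepFun X Y μ) (hY0 : 0 ≤ᵐ[μ] Y) (hYint : Integrable Y μ)
    {c : ℝ} (hc : 0 ≤ c) (hcdf : ∀ t, 0 ≤ t → μ.map X (Iic t) ≤ ENNReal.ofReal (t / c))
    {s β : ℝ} (hs : 0 ≤ s) (hβ : 0 ≤ β) :
    μ {ω | X ω ≤ β * (s + Y ω)} ≤ ENNReal.ofReal (β * (s + μ[Y]) / c) := by
  rw [hXY.measure_le_comp_eq_lintegral hX hY (g := fun y => β * (s + y)) (by fun_prop)]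
  have hint : Integrable (fun ω => β * (s + Y ω) / c) μ :=
    (((integrable_const s).add hYint).const_mul β).div_const c
  calc ∫⁻ ω, μ.map X (Iic (β * (s + Y ω))) ∂μ
      ≤ ∫⁻ ω, ENNReal.ofReal (β * (s + Y ω) / c) ∂μ := by
        refine lintegral_mono_ae ?_
        filter_upwards [hY0] with ω (hω : 0 ≤ Y ω) using hcdf _ (by positivity)
    _ = ENNReal.ofReal (∫ ω, β * (s + Y ω) / c ∂μ) := by
        refine (ofReal_integral_eq_lintegral_ofReal hint ?_).symm
        filter_upwards [hY0] with ω (hω : 0 ≤ Y ω) using by positivity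
    _ = ENNReal.ofReal (β * (s + μ[Y]) / c) := by
        rw [integral_div, integral_const_mul, integral_add (integrable_const s) hYint,
          integral_const, probReal_univ, one_smul]

end ProbabilityTheory

theorem pzf_outage_bound_general {Ω : Type*} [MeasurableSpace Ω] (μ : Measure Ω)
    [IsProbabilityMeasure μ] (S I : Ω → ℝ) (hS : Measurable S) (hI : Measurable I)
    (n k : ℕ) (α d lam β SNR : ℝ)
    (hβ : 0 < β) (hSNR : 0 < SNR)
    (hkn : k + 1 < n)
    (hSdist : Measure.map S μ = volume.withDensity (fun x => ENNReal.ofReal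
      (if 0 < x then x ^ (n - k - 1) * Real.exp (-x) / (Nat.factorial (n - k - 1) : ℝ) else 0)))
    (hindep : IndepFun S I μ)
    (hInn : ∀ᵐ ω ∂μ, 0 ≤ I ω) (hIint : Integrable I μ)
    (hImean : ∫ ω, I ω ∂μ ≤
      (Real.pi * d ^ 2 * lam) ^ (α / 2) * (α / 2 - 1)⁻¹ *
        ((k : ℝ) - (⌈α / 2⌉ : ℤ)) ^ (1 - α / 2)) :
    μ {ω | S ω / (1 / SNR + I ω) ≤ β} ≤
      ENNReal.ofReal (β * ((Real.pi * d ^ 2 * lam) ^ (α / 2) * (α / 2 - 1)⁻¹ *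
          ((k : ℝ) - (⌈α / 2⌉ : ℤ)) ^ (1 - α / 2) + 1 / SNR) / ((n : ℝ) - k - 1)) := by
  obtain ⟨j, rfl⟩ : ∃ j, n = k + j + 2 := ⟨n - k - 2, by omega⟩
  have hdeg : ((k + j + 2 : ℕ) : ℝ) - k - 1 = j + 1 := by push_cast; ring
  have hcdf (t : ℝ) (ht : 0 ≤ t) : μ.map S (Iic t) ≤ ENNReal.ofReal (t / (j + 1)) := by
    rw [hSdist, show k + j + 2 - k - 1 = j + 1 by omega]
    exact withDensity_erlangPDF_Iic_le j ht
  have hevent : μ {ω | S ω / (1 / SNR + I ω) ≤ β} ≤ μ {ω | S ω ≤ β * (1 / SNR + I ω)} := by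
    refine measure_mono_ae ?_
    filter_upwards [hInn] with ω hω hle
    exact (div_le_iff₀ (by positivity)).mp hle
  calc μ {ω | S ω / (1 / SNR + I ω) ≤ β}
      ≤ μ {ω | S ω ≤ β * (1 / SNR + I ω)} := hevent
    _ ≤ ENNReal.ofReal (β * (1 / SNR + ∫ ω, I ω ∂μ) / (j + 1)) :=
        hindep.measure_le_mul_add_le hS hI hInn hIint (by positivity) hcdf (by positivity) hβ.le
    _ ≤ _ := by
        rw [hdeg, add_comm (1 / SNR)]
        gcongr

/-- Outage bound for the PZF receiver: S is χ²_{2(n−k)} distributed, I ≥ 0 independent of S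
with mean bounded by (πd²λ)^(α/2)(α/2−1)⁻¹(k−⌈α/2⌉)^(1−α/2); then
P[S/(1/SNR + I) ≤ β] ≤ β((πd²λ)^(α/2)(α/2−1)⁻¹(k−⌈α/2⌉)^(1−α/2) + 1/SNR)/(n−k−1). -/
theorem pzf_outage_bound {Ω : Type*} [MeasurableSpace Ω] (μ : Measure Ω)
    [IsProbabilityMeasure μ] (S I : Ω → ℝ) (hS : Measurable S) (hI : Measurable I)
    (n k : ℕ) (α d lam β SNR : ℝ)
    (hα : 2 < α) (hd : 0 < d) (hlam : 0 < lam) (hβ : 0 < β) (hSNR : 0 < SNR)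
    (hk : (⌈α / 2⌉ : ℤ) < (k : ℤ)) (hkn : k + 1 < n)
    (hSdist : Measure.map S μ = volume.withDensity (fun x => ENNReal.ofReal
      (if 0 < x then x ^ (n - k - 1) * Real.exp (-x) / (Nat.factorial (n - k - 1) : ℝ) else 0)))
    (hindep : IndepFun S I μ)
    (hInn : ∀ᵐ ω ∂μ, 0 ≤ I ω) (hIint : Integrable I μ)
    (hImean : ∫ ω, I ω ∂μ ≤
      (Real.pi * d ^ 2 * lam) ^ (α / 2) * (α / 2 - 1)⁻¹ *
        ((k : ℝ) - (⌈α / 2⌉ : ℤ)) ^ (1 - α / 2)) :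
    μ {ω | S ω / (1 / SNR + I ω) ≤ β} ≤
      ENNReal.ofReal (β * ((Real.pi * d ^ 2 * lam) ^ (α / 2) * (α / 2 - 1)⁻¹ *
          ((k : ℝ) - (⌈α / 2⌉ : ℤ)) ^ (1 - α / 2) + 1 / SNR) / ((n : ℝ) - k - 1)) :=
  pzf_outage_bound_general μ S I hS hI n k α d lam β SNR hβ hSNR hkn hSdist hindep hInn hIint hImean
end

section
/- For reals x > 0 and 0 < s < 1, Kershaw's inequality holds: Γ(x+1)/Γ(x+s) < (x − 1/2 + √(s + 1/4))^{1−s}. -/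
/-!
Put `b = √(s + 1/4) - 1/2`, so that `b² + b = s`, and
`F y = log Γ(y + 1) - log Γ(y + s) - (1 - s) log (y + b)`; the claim is `F x < 0`.
By `Γ(y + 1) = y Γ(y)`, the increment `F (y + 1) - F y` equals
`log ((y + 1) / (y + s)) - (1 - s) log ((y + b + 1) / (y + b))`, which is positive since it
decreases strictly to `0` as `y → ∞`. Log-convexity of `Γ` gives the bound
`F y ≤ (1 - s) log ((y + s) / (y + b))`, which tends to `0`. Hence
`F x < F (x + 1) ≤ F (x + 1 + n) ≤ (1 - s) log ((x + 1 + n + s) / (x + 1 + n + b))` for every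
`n`, and letting `n → ∞` gives `F x < 0`.
-/

open Real Filter Set Topology

theorem log_Gamma_add_le {x a : ℝ} (hx : 0 < x) (ha0 : 0 ≤ a) (ha1 : a ≤ 1) :
    log (Gamma (x + a)) ≤ a * log x + log (Gamma x) := by
  have hconv := convexOn_log_Gamma.2 (mem_Ioi.2 (by linarith : 0 < x + 1)) (mem_Ioi.2 hx)
    ha0 (by linarith : 0 ≤ 1 - a) (by ring)
  simp only [smul_eq_mul, Function.comp_apply] at hconv
  rw [Gamma_add_one hx.ne', log_mul hx.ne' (Gamma_pos_of_pos hx).ne'] at hconv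
  calc log (Gamma (x + a)) = log (Gamma (a * (x + 1) + (1 - a) * x)) := by ring_nf
    _ ≤ _ := hconv
    _ = _ := by ring

theorem tendsto_log_add_sub_log_add (c d : ℝ) :
    Tendsto (fun t => log (t + c) - log (t + d)) atTop (𝓝 0) := by
  simpa using (tendsto_log_comp_add_sub_log c).sub (tendsto_log_comp_add_sub_log d)

theorem hasDerivAt_log_add_sub_log_add {c d t : ℝ} (hc : 0 < t + c) (hd : 0 < t + d) :
    HasDerivAt (fun u => log (u + c) - log (u + d)) ((d - c) / ((t + c) * (t + d))) t := by
  have hlog {e : ℝ} (he : 0 < t + e) : HasDerivAt (fun u => log (u + e)) (t + e)⁻¹ t := by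
    simpa using ((hasDerivAt_id t).add_const e).log he.ne'
  refine ((hlog hc).sub (hlog hd)).congr_deriv ?_
  field_simp
  ring

theorem StrictAntiOn.lt_of_tendsto_atTop {α β : Type*} [LinearOrder α] [NoMaxOrder α]
    [LinearOrder β] [TopologicalSpace β] [OrderClosedTopology β]
    {f : α → β} {a y : α} {c : β}
    (hf : StrictAntiOn f (Ici a)) (hlim : Tendsto f atTop (𝓝 c)) (hy : a ≤ y) : c < f y := by
  have : Nonempty α := ⟨a⟩
  obtain ⟨z, hyz⟩ := exists_gt y
  have hz : a ≤ z := hy.trans hyz.le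
  refine lt_of_le_of_lt (le_of_tendsto hlim ?_) (hf hy hz hyz)
  filter_upwards [eventually_ge_atTop z] with t ht
  exact hf.antitoneOn hz (hz.trans ht) ht

theorem lt_of_lt_add_one_of_le_of_tendsto {F u : ℝ → ℝ} {x c : ℝ}
    (hstep : ∀ y, x ≤ y → F y < F (y + 1)) (hle : ∀ y, x ≤ y → F y ≤ u y)
    (hu : Tendsto u atTop (𝓝 c)) : F x < c := by
  have hmono : Monotone fun n : ℕ => F (x + 1 + n) := monotone_nat_of_le_succ fun n => by
    simpa [add_assoc] using (hstep (x + 1 + n) (by linarith [(n.cast_nonneg : (0 : ℝ) ≤ n)])).le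
  have hx1 : F (x + 1) ≤ c := by
    refine ge_of_tendsto (hu.comp (tendsto_atTop_add_const_left _ (x + 1)
      tendsto_natCast_atTop_atTop)) (Eventually.of_forall fun n => ?_)
    simpa using (hmono n.zero_le).trans (hle _ (by linarith [(n.cast_nonneg : (0 : ℝ) ≤ n)]))
  exact (hstep x le_rfl).trans_le hx1

theorem kershaw_gap_pos {s b y : ℝ} (hb : 0 < b) (hs : b ^ 2 + b = s) (hs1 : s < 1)
    (hy : 0 ≤ y) :
    0 < (log (y + 1) - log (y + s)) - (1 - s) * (log (y + (b + 1)) - log (y + b)) := by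
  have hs0 : 0 < s := by nlinarith
  have hb1 : b < 1 := by nlinarith
  set g : ℝ → ℝ := fun t =>
    (log (t + 1) - log (t + s)) - (1 - s) * (log (t + (b + 1)) - log (t + b))
  have hderiv : ∀ t ∈ Ici (0 : ℝ), HasDerivAt g ((s - 1) / ((t + 1) * (t + s)) -
      (1 - s) * ((b - (b + 1)) / ((t + (b + 1)) * (t + b)))) t := fun t (ht : 0 ≤ t) =>
    (hasDerivAt_log_add_sub_log_add (by linarith) (by linarith)).sub
      ((hasDerivAt_log_add_sub_log_add (by linarith) (by linarith)).const_mul (1 - s))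
  have hanti : StrictAntiOn g (Ici 0) := by
    refine strictAntiOn_of_deriv_neg (convex_Ici 0)
      (fun t ht => (hderiv t ht).continuousAt.continuousWithinAt) fun t ht => ?_
    rw [interior_Ici, mem_Ioi] at ht
    rw [(hderiv t ht.le).deriv]
    -- `b ^ 2 + b = s` makes the two quadratics share their constant term
    have hQP : (t + 1) * (t + s) < (t + (b + 1)) * (t + b) := by
      nlinarith [mul_pos (mul_pos ht hb) (sub_pos.2 hb1)]
    have hrecip : (1 - s) / ((t + (b + 1)) * (t + b)) < (1 - s) / ((t + 1) * (t + s)) :=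
      div_lt_div_of_pos_left (by linarith) (by positivity) hQP
    have hderiv_eq : (s - 1) / ((t + 1) * (t + s)) -
        (1 - s) * ((b - (b + 1)) / ((t + (b + 1)) * (t + b))) =
          (1 - s) / ((t + (b + 1)) * (t + b)) - (1 - s) / ((t + 1) * (t + s)) := by ring
    linarith
  refine hanti.lt_of_tendsto_atTop ?_ hy
  simpa using (tendsto_log_add_sub_log_add 1 s).sub
    ((tendsto_log_add_sub_log_add (b + 1) b).const_mul (1 - s))

noncomputable def kershawLogRatio (s b y : ℝ) : ℝ :=
  log (Gamma (y + 1)) - log (Gamma (y + s)) - (1 - s) * log (y + b)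

theorem kershawLogRatio_lt_add_one {s b y : ℝ} (hb : 0 < b) (hs : b ^ 2 + b = s) (hs1 : s < 1)
    (hy : 0 ≤ y) : kershawLogRatio s b y < kershawLogRatio s b (y + 1) := by
  have hs0 : 0 < s := by nlinarith
  have hy1 : 0 < y + 1 := by linarith
  have hys : 0 < y + s := by linarith
  have hgap := kershaw_gap_pos hb hs hs1 hy
  unfold kershawLogRatio
  rw [Gamma_add_one hy1.ne', show y + 1 + s = y + s + 1 by ring, Gamma_add_one hys.ne',
    log_mul hy1.ne' (Gamma_pos_of_pos hy1).ne', log_mul hys.ne' (Gamma_pos_of_pos hys).ne',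
    show y + 1 + b = y + (b + 1) by ring]
  linarith

theorem kershawLogRatio_le {s b y : ℝ} (hs0 : 0 ≤ s) (hs1 : s ≤ 1) (hy : 0 < y + s) :
    kershawLogRatio s b y ≤ (1 - s) * (log (y + s) - log (y + b)) := by
  have h := log_Gamma_add_le hy (sub_nonneg.2 hs1) (by linarith : 1 - s ≤ 1)
  rw [show y + s + (1 - s) = y + 1 by ring] at h
  unfold kershawLogRatio
  linarith

/-- Kershaw's inequality: for x > 0 and 0 < s < 1,
Γ(x+1)/Γ(x+s) < (x − 1/2 + √(s + 1/4))^(1−s). -/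
theorem kershaw_inequality (x s : ℝ) (hx : 0 < x) (hs0 : 0 < s) (hs1 : s < 1) :
    Real.Gamma (x + 1) / Real.Gamma (x + s) <
      (x - 1 / 2 + Real.sqrt (s + 1 / 4)) ^ (1 - s) := by
  set b := √(s + 1 / 4) - 1 / 2 with hb_def
  have hsqrt : √(s + 1 / 4) ^ 2 = s + 1 / 4 := sq_sqrt (by linarith)
  have hb : 0 < b := by nlinarith [sqrt_nonneg (s + 1 / 4)]
  have hbs : b ^ 2 + b = s := by nlinarith
  have hneg : kershawLogRatio s b x < 0 :=
    lt_of_lt_add_one_of_le_of_tendsto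
      (fun y hy => kershawLogRatio_lt_add_one hb hbs hs1 (hx.le.trans hy))
      (fun y hy => kershawLogRatio_le hs0.le hs1.le (by linarith))
      (by simpa using (tendsto_log_add_sub_log_add s b).const_mul (1 - s))
  have hxs : 0 < x + s := by linarith
  have hxb : 0 < x + b := by linarith
  rw [show x - 1 / 2 + √(s + 1 / 4) = x + b by ring, ← log_lt_log_iff
    (div_pos (Gamma_pos_of_pos (by linarith)) (Gamma_pos_of_pos hxs)) (rpow_pos_of_pos hxb _),
    log_div (Gamma_pos_of_pos (by linarith)).ne' (Gamma_pos_of_pos hxs).ne', log_rpow hxb]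
  unfold kershawLogRatio at hneg
  linarith
end
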